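/- Let T_1 and T_2 be bounded linear operators on a complex Hilbert space H. Then ω²([[O, T_1],[T_2*, O]]) ≤ (1/2) ω([[O, (3/2)(T_1* T_1 + T_2* T_2)],[T_2* T_1, O]]), where ω² denotes the square of the numerical radius. -/

import Mathlib

open ContinuousLinearMap

/-- The numerical radius of a bounded linear operator on a complex inner product space:
`ω(T) = sup_{‖x‖ = 1} |⟨Tx, x⟩|`. -/
noncomputable def numRadius {H : Type*} [NormedAddCommGroup H] [InnerProductSpace ℂ H]
    (T : H →L[ℂ] H) : ℝ :=
  ⨆ x : {x : H // ‖x‖ = 1}, ‖(inner ℂ (T x) (x : H) : ℂ)‖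

/-- The operator matrix `[[O, A], [B, O]]` acting on the Hilbert space direct sum
`H ⊕ H`, sending `(x, y)` to `(A y, B x)`. -/
noncomputable def offDiagOp {H : Type*} [NormedAddCommGroup H] [InnerProductSpace ℂ H]
    (A B : H →L[ℂ] H) : WithLp 2 (H × H) →L[ℂ] WithLp 2 (H × H) :=
  (((WithLp.prodContinuousLinearEquiv 2 ℂ H H).symm :
        (H × H) →L[ℂ] WithLp 2 (H × H)).comp
      ((A.comp (ContinuousLinearMap.snd ℂ H H)).prod
        (B.comp (ContinuousLinearMap.fst ℂ H H)))).comp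
    ((WithLp.prodContinuousLinearEquiv 2 ℂ H H : WithLp 2 (H × H) ≃L[ℂ] H × H) :
      WithLp 2 (H × H) →L[ℂ] H × H)

/-! For a unit vector `z = (x, y)` the quadratic form of `[[O, T₁], [T₂*, O]]` is
`⟨T₁ y, x⟩ + ⟨x, T₂ y⟩`. Cauchy–Schwarz and Buzano's inequality bound its square by
`‖x‖² ((3/2)(‖T₁ y‖² + ‖T₂ y‖²) + |⟨T₁ y, T₂ y⟩|)`, and evaluating the quadratic form of the
second operator matrix at `(y, c y)` for a suitable unimodular `c` bounds the bracket by
`2 ‖y‖² ω`. Since `‖x‖² + ‖y‖² = 1`, we have `‖x‖² ‖y‖² ≤ 1/4`. -/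

open scoped InnerProductSpace

section InnerProductSpace

variable {𝕜 E : Type*} [RCLike 𝕜] [NormedAddCommGroup E] [InnerProductSpace 𝕜 E]

theorem norm_inner_mul_inner_le (a b x : E) :
    ‖⟪a, x⟫_𝕜 * ⟪x, b⟫_𝕜‖ ≤ ‖x‖ ^ 2 * (‖a‖ * ‖b‖ + ‖⟪a, b⟫_𝕜‖) / 2 := by
  set v : E := (2 : 𝕜) • (⟪x, a⟫_𝕜 • x) - ((‖x‖ ^ 2 : ℝ) : 𝕜) • a with hv_def
  have hv_norm : ‖v‖ = ‖x‖ ^ 2 * ‖a‖ := by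
    have hv : v = ((‖x‖ ^ 2 : ℝ) : 𝕜) • (𝕜 ∙ x).reflection a := by
      rw [hv_def, Submodule.reflection_apply, smul_sub, smul_comm _ (2 : ℕ),
        Submodule.smul_starProjection_singleton, ofNat_smul_eq_nsmul]
    rw [hv, norm_smul, LinearIsometryEquiv.norm_map, RCLike.norm_ofReal,
      abs_of_nonneg (by positivity)]
  have hv_inner : ⟪v, b⟫_𝕜 = 2 * (⟪a, x⟫_𝕜 * ⟪x, b⟫_𝕜) - ((‖x‖ ^ 2 : ℝ) : 𝕜) * ⟪a, b⟫_𝕜 := by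
    simp only [v, inner_sub_left, inner_smul_left, inner_conj_symm, map_ofNat, RCLike.conj_ofReal]
  have htwice : 2 * ‖⟪a, x⟫_𝕜 * ⟪x, b⟫_𝕜‖ ≤ ‖x‖ ^ 2 * (‖a‖ * ‖b‖ + ‖⟪a, b⟫_𝕜‖) :=
    calc 2 * ‖⟪a, x⟫_𝕜 * ⟪x, b⟫_𝕜‖
        = ‖⟪v, b⟫_𝕜 + ((‖x‖ ^ 2 : ℝ) : 𝕜) * ⟪a, b⟫_𝕜‖ := by
          rw [hv_inner, sub_add_cancel, norm_mul (2 : 𝕜), RCLike.norm_ofNat]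
      _ ≤ ‖v‖ * ‖b‖ + ‖x‖ ^ 2 * ‖⟪a, b⟫_𝕜‖ := by
          refine (norm_add_le _ _).trans (add_le_add (norm_inner_le_norm _ _) ?_)
          rw [norm_mul, RCLike.norm_ofReal, abs_of_nonneg (by positivity)]
      _ = ‖x‖ ^ 2 * (‖a‖ * ‖b‖ + ‖⟪a, b⟫_𝕜‖) := by rw [hv_norm]; ring
  linarith

theorem norm_inner_add_inner_sq_le (a b x : E) :
    ‖⟪a, x⟫_𝕜 + ⟪x, b⟫_𝕜‖ ^ 2 ≤ ‖x‖ ^ 2 * (3 / 2 * (‖a‖ ^ 2 + ‖b‖ ^ 2) + ‖⟪a, b⟫_𝕜‖) := by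
  have hsum : ‖⟪a, x⟫_𝕜 + ⟪x, b⟫_𝕜‖ ≤ ‖⟪a, x⟫_𝕜‖ + ‖⟪x, b⟫_𝕜‖ := norm_add_le _ _
  have ha : ‖⟪a, x⟫_𝕜‖ ≤ ‖a‖ * ‖x‖ := norm_inner_le_norm _ _
  have hb : ‖⟪x, b⟫_𝕜‖ ≤ ‖x‖ * ‖b‖ := norm_inner_le_norm _ _
  have hab := norm_inner_mul_inner_le (𝕜 := 𝕜) a b x
  rw [norm_mul] at hab
  nlinarith [sq_nonneg (‖a‖ - ‖b‖), sq_nonneg ‖x‖, norm_nonneg (⟪a, x⟫_𝕜 + ⟪x, b⟫_𝕜),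
    norm_nonneg ⟪a, x⟫_𝕜, norm_nonneg ⟪x, b⟫_𝕜]

end InnerProductSpace

theorem Complex.exists_norm_eq_one_sq_mul_eq_norm (d : ℂ) :
    ∃ c : ℂ, ‖c‖ = 1 ∧ c ^ 2 * d = ‖d‖ := by
  set θ := d.arg
  refine ⟨Complex.exp ((-(θ / 2) : ℝ) * Complex.I), Complex.norm_exp_ofReal_mul_I _, ?_⟩
  conv_lhs => rw [← Complex.norm_mul_exp_arg_mul_I d]
  rw [← Complex.exp_nat_mul, mul_left_comm, ← Complex.exp_add]
  have hexp : ((2 : ℕ) : ℂ) * ((-(θ / 2) : ℝ) * Complex.I) + θ * Complex.I = 0 := by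
    push_cast; ring
  rw [hexp, Complex.exp_zero, mul_one]

section NumRadius

variable {H : Type*} [NormedAddCommGroup H] [InnerProductSpace ℂ H]

theorem numRadius_nonneg (T : H →L[ℂ] H) : 0 ≤ numRadius T :=
  Real.iSup_nonneg fun _ => norm_nonneg _

theorem norm_inner_le_numRadius_mul_sq (T : H →L[ℂ] H) (z : H) :
    ‖⟪T z, z⟫_ℂ‖ ≤ numRadius T * ‖z‖ ^ 2 := by
  rcases eq_or_ne z 0 with rfl | hz
  · simp
  have hbdd : BddAbove (Set.range fun u : {u : H // ‖u‖ = 1} => ‖⟪T u, u⟫_ℂ‖) := by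
    refine ⟨‖T‖, ?_⟩
    rintro _ ⟨u, rfl⟩
    calc ‖⟪T u, u⟫_ℂ‖ ≤ ‖T u‖ * ‖(u : H)‖ := norm_inner_le_norm _ _
      _ ≤ ‖T‖ * ‖(u : H)‖ * ‖(u : H)‖ := by gcongr; exact T.le_opNorm _
      _ = ‖T‖ := by rw [u.2, mul_one, mul_one]
  have hz_pos : 0 < ‖z‖ := norm_pos_iff.mpr hz
  have hunit := le_ciSup hbdd ⟨(‖z‖ : ℂ)⁻¹ • z, norm_smul_inv_norm hz⟩
  have hscale : ‖⟪T ((‖z‖ : ℂ)⁻¹ • z), (‖z‖ : ℂ)⁻¹ • z⟫_ℂ‖ = ‖⟪T z, z⟫_ℂ‖ / ‖z‖ ^ 2 := by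
    rw [map_smul, inner_smul_left, inner_smul_right, norm_mul, norm_mul, Complex.norm_conj,
      norm_inv, Complex.norm_real, norm_norm]
    field_simp
  rw [hscale, div_le_iff₀ (by positivity)] at hunit
  exact hunit

theorem numRadius_sq_le_of_forall {T : H →L[ℂ] H} {r : ℝ} (hr : 0 ≤ r)
    (h : ∀ z : H, ‖z‖ = 1 → ‖⟪T z, z⟫_ℂ‖ ^ 2 ≤ r) : numRadius T ^ 2 ≤ r := by
  have hle : numRadius T ≤ √r :=
    Real.iSup_le (fun z => Real.le_sqrt_of_sq_le (h z z.2)) (Real.sqrt_nonneg r)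
  calc numRadius T ^ 2 ≤ √r ^ 2 := pow_le_pow_left₀ (numRadius_nonneg T) hle 2
    _ = r := Real.sq_sqrt hr

theorem inner_offDiagOp (A B : H →L[ℂ] H) (z : WithLp 2 (H × H)) :
    ⟪offDiagOp A B z, z⟫_ℂ = ⟪A z.snd, z.fst⟫_ℂ + ⟪B z.fst, z.snd⟫_ℂ := by
  rw [WithLp.prod_inner_apply]
  rfl

theorem norm_inner_add_norm_inner_le_numRadius_offDiagOp (C D : H →L[ℂ] H) (y : H) :
    ‖⟪C y, y⟫_ℂ + ‖⟪D y, y⟫_ℂ‖‖ ≤ 2 * ‖y‖ ^ 2 * numRadius (offDiagOp C D) := by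
  obtain ⟨c, hc, hcd⟩ := Complex.exists_norm_eq_one_sq_mul_eq_norm ⟪D y, y⟫_ℂ
  have hc_conj : (starRingEnd ℂ) c * c = 1 := by
    rw [Complex.conj_mul', hc, Complex.ofReal_one, one_pow]
  set w : WithLp 2 (H × H) := WithLp.toLp 2 (y, c • y)
  have hw_norm : ‖w‖ ^ 2 = 2 * ‖y‖ ^ 2 := by
    rw [WithLp.prod_norm_sq_eq_of_L2]
    simp only [w, WithLp.toLp_fst, WithLp.toLp_snd, norm_smul, hc, one_mul]
    ring
  have hw_inner : ⟪offDiagOp C D w, w⟫_ℂ = (starRingEnd ℂ) c * (⟪C y, y⟫_ℂ + ‖⟪D y, y⟫_ℂ‖) := by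
    rw [inner_offDiagOp, ← hcd]
    simp only [w, WithLp.toLp_fst, WithLp.toLp_snd, map_smul, inner_smul_left, inner_smul_right]
    linear_combination (-(c * ⟪D y, y⟫_ℂ)) * hc_conj
  calc ‖⟪C y, y⟫_ℂ + ‖⟪D y, y⟫_ℂ‖‖ = ‖⟪offDiagOp C D w, w⟫_ℂ‖ := by
        rw [hw_inner, norm_mul, Complex.norm_conj, hc, one_mul]
    _ ≤ numRadius (offDiagOp C D) * ‖w‖ ^ 2 := norm_inner_le_numRadius_mul_sq _ _
    _ = 2 * ‖y‖ ^ 2 * numRadius (offDiagOp C D) := by rw [hw_norm]; ring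

end NumRadius

theorem numRadius_sq_offDiag_le_half
    {H : Type*} [NormedAddCommGroup H] [InnerProductSpace ℂ H] [CompleteSpace H]
    (T₁ T₂ : H →L[ℂ] H) :
    numRadius (offDiagOp T₁ (adjoint T₂)) ^ 2 ≤
      (1 / 2) * numRadius (offDiagOp
        (((3 : ℂ) / 2) • (adjoint T₁ ∘L T₁ + adjoint T₂ ∘L T₂))
        (adjoint T₂ ∘L T₁)) := by
  set C := ((3 : ℂ) / 2) • (adjoint T₁ ∘L T₁ + adjoint T₂ ∘L T₂)
  set D := adjoint T₂ ∘L T₁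
  have hω := numRadius_nonneg (offDiagOp C D)
  refine numRadius_sq_le_of_forall (by positivity) fun z hz => ?_
  have hxy : ‖z.fst‖ ^ 2 + ‖z.snd‖ ^ 2 = 1 := by
    rw [← WithLp.prod_norm_sq_eq_of_L2, hz, one_pow]
  have hC : ⟪C z.snd, z.snd⟫_ℂ = ((3 / 2 * (‖T₁ z.snd‖ ^ 2 + ‖T₂ z.snd‖ ^ 2) : ℝ) : ℂ) := by
    simp only [C, smul_apply, add_apply, comp_apply, inner_smul_left, inner_add_left,
      adjoint_inner_left, inner_self_eq_norm_sq_to_K, map_div₀, map_ofNat, Complex.coe_algebraMap]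
    push_cast
    ring
  have hD : ⟪D z.snd, z.snd⟫_ℂ = ⟪T₁ z.snd, T₂ z.snd⟫_ℂ := by
    rw [comp_apply, adjoint_inner_left]
  have hlow := norm_inner_add_norm_inner_le_numRadius_offDiagOp C D z.snd
  rw [hC, hD, ← Complex.ofReal_add, Complex.norm_real,
    Real.norm_of_nonneg (by positivity)] at hlow
  calc ‖⟪offDiagOp T₁ (adjoint T₂) z, z⟫_ℂ‖ ^ 2
      = ‖⟪T₁ z.snd, z.fst⟫_ℂ + ⟪z.fst, T₂ z.snd⟫_ℂ‖ ^ 2 := by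
        rw [inner_offDiagOp, adjoint_inner_left]
    _ ≤ ‖z.fst‖ ^ 2 * (3 / 2 * (‖T₁ z.snd‖ ^ 2 + ‖T₂ z.snd‖ ^ 2) + ‖⟪T₁ z.snd, T₂ z.snd⟫_ℂ‖) :=
        norm_inner_add_inner_sq_le _ _ _
    _ ≤ ‖z.fst‖ ^ 2 * (2 * ‖z.snd‖ ^ 2 * numRadius (offDiagOp C D)) := by gcongr
    _ ≤ 1 / 2 * numRadius (offDiagOp C D) := by
        have h4 : 4 * (‖z.fst‖ ^ 2 * ‖z.snd‖ ^ 2) ≤ 1 := by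
          nlinarith [sq_nonneg (‖z.fst‖ ^ 2 - ‖z.snd‖ ^ 2)]
        nlinarith [mul_le_mul_of_nonneg_right h4 hω]
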